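/- Let n ≥ 1 and let C ⊆ 𝔽₃ⁿ be a greedy capset. Then the cardinality of C equals 2ⁿ. -/

import Mathlib

/-- A line in `𝔽₃ⁿ`: a coset of a one-dimensional linear subspace. -/
def IsLine {n : ℕ} (L : Set (Fin n → ZMod 3)) : Prop :=
  ∃ p v : Fin n → ZMod 3, v ≠ 0 ∧ L = {x | ∃ t : ZMod 3, x = p + t • v}

/-- A capset: a subset of `𝔽₃ⁿ` containing no line. -/
def IsCapset {n : ℕ} (C : Set (Fin n → ZMod 3)) : Prop :=
  ∀ L : Set (Fin n → ZMod 3), IsLine L → ¬ L ⊆ C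

/-- `lineDeg S P`: the number of lines through `P` that are contained in `S`. -/
noncomputable def lineDeg {n : ℕ} (S : Set (Fin n → ZMod 3)) (P : Fin n → ZMod 3) : ℕ :=
  Set.ncard {L : Set (Fin n → ZMod 3) | IsLine L ∧ P ∈ L ∧ L ⊆ S}

/-- The sequence of sets in a greedy construction removing the points `P 0, P 1, …`. -/
def greedySeq {n : ℕ} (P : ℕ → (Fin n → ZMod 3)) : ℕ → Set (Fin n → ZMod 3)
  | 0 => Set.univ
  | (i+1) => greedySeq P i \ {P i}

/-- A greedy capset: a capset obtained from `𝔽₃ⁿ` by successively removing a point whose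
number of lines through it contained in the remaining set is positive and maximal,
until the remaining set is a capset. -/
def IsGreedyCapset {n : ℕ} (C : Set (Fin n → ZMod 3)) : Prop :=
  ∃ (k : ℕ) (P : ℕ → (Fin n → ZMod 3)),
    (∀ i < k, P i ∈ greedySeq P i ∧ 0 < lineDeg (greedySeq P i) (P i) ∧
      ∀ Q ∈ greedySeq P i, lineDeg (greedySeq P i) Q ≤ lineDeg (greedySeq P i) (P i)) ∧
    C = greedySeq P k ∧ IsCapset C

/-- An affine hyperplane in `𝔽₃ⁿ`: the solution set of one nontrivial linear equation. -/
def IsHyperplane {n : ℕ} (H : Set (Fin n → ZMod 3)) : Prop :=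
  ∃ (a : Fin n → ZMod 3) (b : ZMod 3), a ≠ 0 ∧ H = {x | ∑ i, a i * x i = b}

/-- `H₀, H₁, H₂` form a triple of parallel affine hyperplanes partitioning `𝔽₃ⁿ`
(`H₁` and `H₂` are the two hyperplanes parallel to `H₀`). -/
def ParallelTriple {n : ℕ} (H₀ H₁ H₂ : Set (Fin n → ZMod 3)) : Prop :=
  ∃ (a : Fin n → ZMod 3) (b : ZMod 3), a ≠ 0 ∧
    H₀ = {x | ∑ i, a i * x i = b} ∧
    H₁ = {x | ∑ i, a i * x i = b + 1} ∧
    H₂ = {x | ∑ i, a i * x i = b + 2}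

/-!
For an affine subspace `B`, removed points `R ⊆ B` and `X ∈ B \ R`, counting the lines through `X`
gives `2 deg(X) + 2|R| + 1 = |B| + #{q ∈ R | -X - q ∈ R}`, so the greedy rule picks a point on as
many lines as possible that meet `R` twice. Hence, while `R` is not an affine subspace, the next
point lies in every affine subspace containing `R`, and `R` is always a flat or lies between a flat
`A` and a flat of `3|A|` points.

If `|B| = 3^(m+1)`, at least `3^m` points have to be removed before no line is left, and after
exactly `3^m` removals `R` is a flat `A`. The rest of `B` is the union of two translates of `A`, and
every line meeting both has its third point in `A`, so the remaining greedy construction splits into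
greedy constructions on the two translates; by induction each of them leaves `2^m` points.
-/

open Set Function Relation Pointwise

theorem Relation.ReflTransGen.exists_between {α : Type*} {r : α → α → Prop} (f : α → ℕ)
    (hf : ∀ a b, r a b → f a = f b + 1) {a c : α} (h : ReflTransGen r a c) {k : ℕ}
    (hc : f c ≤ k) (ha : k ≤ f a) : ∃ b, ReflTransGen r a b ∧ ReflTransGen r b c ∧ f b = k := by
  induction h with
  | refl => exact ⟨a, .refl, .refl, le_antisymm hc ha⟩
  | @tail b c hab hbc ih =>
    rcases (hc.lt_or_eq : f c < k ∨ f c = k) with hlt | rfl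
    · obtain ⟨b', hab', hb'b, hb'⟩ := ih (by rw [hf b c hbc]; exact hlt)
      exact ⟨b', hab', hb'b.tail hbc, hb'⟩
    · exact ⟨c, hab.tail hbc, .refl, rfl⟩

section LineClosed

variable {V : Type*} [AddCommGroup V]

/-- In characteristic 3 the third point of the line through `p ≠ q` is `-p - q`, so these are
the sets containing every line through two of their points: the affine subspaces and `∅`. -/
def IsLineClosed (A : Set V) : Prop := ∀ p ∈ A, ∀ q ∈ A, -p - q ∈ A

theorem isLineClosed_univ : IsLineClosed (univ : Set V) := fun _ _ _ _ => trivial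

theorem IsLineClosed.neg_sub_mem_vadd {A : Set V} (hA : IsLineClosed A) {v w p q : V}
    (hp : p ∈ v +ᵥ A) (hq : q ∈ w +ᵥ A) : -p - q ∈ (-v - w) +ᵥ A := by
  obtain ⟨a, ha, rfl⟩ := hp
  obtain ⟨b, hb, rfl⟩ := hq
  refine ⟨-a - b, hA a ha b hb, ?_⟩
  simp only [vadd_eq_add]
  abel

variable [Module (ZMod 3) V]

theorem zmod_three_cases (t : ZMod 3) : t = 0 ∨ t = 1 ∨ t = 2 := by
  revert t; decide

theorem neg_sub_self_eq_self (x : V) : -x - x = x := by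
  linear_combination (norm := module) -ZModModule.char_nsmul_eq_zero 3 x

theorem setOf_add_smul_sub (x y : V) :
    {z | ∃ t : ZMod 3, z = x + t • (y - x)} = {x, y, -x - y} := by
  ext z
  simp only [mem_ofPred_eq, mem_insert_iff, mem_singleton_iff]
  constructor
  · rintro ⟨t, rfl⟩
    obtain rfl | rfl | rfl := zmod_three_cases t
    · simp
    · simp
    · right; right
      linear_combination (norm := module) ZModModule.char_nsmul_eq_zero 3 y
  · rintro (rfl | rfl | rfl)
    · exact ⟨0, by simp⟩
    · exact ⟨1, by simp⟩
    · exact ⟨2, by linear_combination (norm := module) -ZModModule.char_nsmul_eq_zero 3 y⟩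

theorem isLineClosed_singleton (x : V) : IsLineClosed ({x} : Set V) := by
  intro p hp q hq
  rw [mem_singleton_iff] at hp hq ⊢
  rw [hp, hq, neg_sub_self_eq_self]

namespace IsLineClosed

variable {A : Set V}

theorem add_smul_sub_mem (hA : IsLineClosed A) {a b c : V} (ha : a ∈ A) (hb : b ∈ A)
    (hc : c ∈ A) (t : ZMod 3) : c + t • (b - a) ∈ A := by
  have hline : a + t • (b - a) ∈ A := by
    obtain rfl | rfl | rfl := zmod_three_cases t
    · simpa using ha
    · simpa using hb
    · convert hA a ha b hb using 1
      linear_combination (norm := module) ZModModule.char_nsmul_eq_zero 3 b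
  convert hA _ (hA _ hline c hc) a ha using 1
  abel

theorem vadd (hA : IsLineClosed A) (v : V) : IsLineClosed (v +ᵥ A) := by
  intro p hp q hq
  convert hA.neg_sub_mem_vadd hp hq using 2
  linear_combination (norm := module) ZModModule.char_nsmul_eq_zero 3 v

end IsLineClosed

/-- For a line-closed `A` and `a ∈ A`, the smallest line-closed set containing `A` and `a + d`. -/
def join (A : Set V) (d : V) : Set V := ⋃ t : ZMod 3, t • d +ᵥ A

variable {A : Set V} {d : V}

theorem subset_join : A ⊆ join A d :=
  fun a ha => mem_iUnion.2 ⟨0, by simpa using ha⟩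

theorem add_mem_join {a : V} (ha : a ∈ A) : a + d ∈ join A d :=
  mem_iUnion.2 ⟨1, by simpa [add_comm] using ⟨a, ha, rfl⟩⟩

theorem isLineClosed_join (hA : IsLineClosed A) : IsLineClosed (join A d) := by
  intro p hp q hq
  obtain ⟨s, hs⟩ := mem_iUnion.1 hp
  obtain ⟨t, ht⟩ := mem_iUnion.1 hq
  exact mem_iUnion.2 ⟨-s - t, by simpa [sub_smul, neg_smul] using hA.neg_sub_mem_vadd hs ht⟩

theorem IsLineClosed.join_subset {R : Set V} (hR : IsLineClosed R) (hAR : A ⊆ R) {a : V}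
    (ha : a ∈ A) (had : a + d ∈ R) : join A d ⊆ R := by
  intro y hy
  obtain ⟨t, b, hb, rfl⟩ := mem_iUnion.1 hy
  convert hR.add_smul_sub_mem (hAR ha) had (hAR hb) t using 1
  exact (add_comm _ _).trans (by rw [add_sub_cancel_left])

theorem IsLineClosed.pairwise_disjoint_vadd (hA : IsLineClosed A) {a : V} (ha : a ∈ A)
    (had : a + d ∉ A) : Pairwise (Disjoint on fun t : ZMod 3 => t • d +ᵥ A) := by
  intro s t hst
  refine Set.disjoint_left.2 fun y hs ht => had ?_
  obtain ⟨b, hb, rfl⟩ := hs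
  obtain ⟨c, hc, hbc⟩ := ht
  have hd : d = (s - t)⁻¹ • (c - b) := by
    rw [eq_inv_smul_iff₀ (sub_ne_zero.2 hst), sub_smul]
    simp only [vadd_eq_add] at hbc
    linear_combination (norm := module) -hbc
  rw [hd]
  exact hA.add_smul_sub_mem hb hc ha _

theorem IsLineClosed.join_sdiff_eq (hA : IsLineClosed A) {a : V} (ha : a ∈ A) (had : a + d ∉ A) :
    join A d \ A = ((1 : ZMod 3) • d +ᵥ A) ∪ ((2 : ZMod 3) • d +ᵥ A) := by
  have hdisj := hA.pairwise_disjoint_vadd ha had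
  have hA0 : A = (0 : ZMod 3) • d +ᵥ A := by simp
  ext y
  simp only [join, mem_sdiff, mem_iUnion, mem_union]
  constructor
  · rintro ⟨⟨t, ht⟩, hyA⟩
    obtain rfl | rfl | rfl := zmod_three_cases t
    · exact absurd (hA0 ▸ ht) hyA
    · exact Or.inl ht
    · exact Or.inr ht
  · rintro (hy | hy)
    · exact ⟨⟨1, hy⟩, fun hyA => disjoint_left.1 (hdisj (by decide)) hy (hA0 ▸ hyA)⟩
    · exact ⟨⟨2, hy⟩, fun hyA => disjoint_left.1 (hdisj (by decide)) hy (hA0 ▸ hyA)⟩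

theorem ncard_join_le : (join A d).ncard ≤ 3 * A.ncard := by
  refine (ncard_iUnion_le_of_fintype _).trans ?_
  simp [ZMod.card]

variable [Finite V]

theorem IsLineClosed.ncard_join (hA : IsLineClosed A) {a : V} (ha : a ∈ A) (had : a + d ∉ A) :
    (join A d).ncard = 3 * A.ncard := by
  rw [join, ncard_iUnion_of_finite (fun _ => toFinite _) (hA.pairwise_disjoint_vadd ha had),
    finsum_eq_sum_of_fintype]
  simp [ZMod.card]

end LineClosed

section Flat

variable {V : Type*} [AddCommGroup V]

def IsFlat (A : Set V) : Prop := IsLineClosed A ∧ ∃ e, A.ncard = 3 ^ e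

def IsFlatStage (R : Set V) : Prop :=
  R = ∅ ∨ IsFlat R ∨
    ∃ A S, IsFlat A ∧ IsLineClosed S ∧ S.ncard = 3 * A.ncard ∧ A ⊆ R ∧ R ⊆ S

variable {A B R S : Set V} {X : V}

theorem IsFlat.nonempty (hA : IsFlat A) : A.Nonempty := by
  obtain ⟨e, he⟩ := hA.2
  exact nonempty_of_ncard_ne_zero (by rw [he]; positivity)

theorem IsFlatStage.isLineClosed [Finite V] (hR : IsFlatStage R) {m : ℕ} (hm : R.ncard = 3 ^ m) :
    IsLineClosed R := by
  rcases hR with rfl | hR | ⟨A, S, hA, hS, hcard, hAR, hRS⟩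
  · exact fun p hp => hp.elim
  · exact hR.1
  obtain ⟨e, he⟩ := hA.2
  rcases le_or_gt m e with hme | hem
  · have hRA : A = R := eq_of_subset_of_ncard_le hAR (by rw [hm, he]; gcongr; norm_num)
    exact hRA ▸ hA.1
  · have hRS : R = S := eq_of_subset_of_ncard_le hRS <| by
      rw [hm, hcard, he, ← pow_succ']
      exact Nat.pow_le_pow_right (by norm_num) hem
    exact hRS ▸ hS

variable [Module (ZMod 3) V]

theorem isFlat_singleton (x : V) : IsFlat ({x} : Set V) :=
  ⟨isLineClosed_singleton x, 0, ncard_singleton x⟩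

variable [Finite V]

theorem IsFlat.isFlatStage_insert (hR : IsFlat R) (hX : X ∉ R) : IsFlatStage (insert X R) := by
  obtain ⟨r, hr⟩ := hR.nonempty
  obtain ⟨d, rfl⟩ : ∃ d, X = r + d := ⟨X - r, (add_sub_cancel r X).symm⟩
  exact Or.inr <| Or.inr ⟨R, join R d, hR, isLineClosed_join hR.1, hR.1.ncard_join hr hX,
    subset_insert _ R, insert_subset (add_mem_join hr) subset_join⟩

theorem IsLineClosed.eq_or_eq_of_subset (hR : IsLineClosed R) (hA : IsLineClosed A)
    (hA' : A.Nonempty) (hS : S.ncard = 3 * A.ncard) (hAR : A ⊆ R) (hRS : R ⊆ S) :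
    R = A ∨ R = S := by
  by_cases hRA : R ⊆ A
  · exact Or.inl (hRA.antisymm hAR)
  obtain ⟨x, hxR, hxA⟩ := not_subset.1 hRA
  obtain ⟨a, ha⟩ := hA'
  obtain ⟨d, rfl⟩ : ∃ d, x = a + d := ⟨x - a, (add_sub_cancel a x).symm⟩
  refine Or.inr (eq_of_subset_of_ncard_le hRS ?_)
  rw [hS, ← hA.ncard_join ha hxA]
  exact ncard_le_ncard (hR.join_subset hAR ha hxR)

theorem IsFlatStage.insert (hR : IsFlatStage R) (hX : X ∉ R)
    (h : IsLineClosed R ∨ ∃ q ∈ R, -X - q ∈ R) : IsFlatStage (insert X R) := by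
  rcases hR with rfl | hR | ⟨A, S, hA, hS, hcard, hAR, hRS⟩
  · rw [insert_empty_eq]
    exact Or.inr (Or.inl (isFlat_singleton X))
  · exact hR.isFlatStage_insert hX
  rcases h with hR | ⟨q, hq, hXq⟩
  · obtain ⟨e, he⟩ := hA.2
    have hflat : IsFlat R := by
      rcases hR.eq_or_eq_of_subset hA.1 hA.nonempty hcard hAR hRS with rfl | rfl
      · exact hA
      · exact ⟨hS, e + 1, by rw [hcard, he, pow_succ, mul_comm]⟩
    exact hflat.isFlatStage_insert hX
  · have hXS : X ∈ S := by
      convert hS q (hRS hq) _ (hRS hXq) using 1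
      abel
    exact Or.inr <| Or.inr ⟨A, S, hA, hS, hcard, hAR.trans (subset_insert X R),
      insert_subset hXS hRS⟩

theorem IsLineClosed.exists_sdiff_eq_union (hB : IsLineClosed B) (hA : IsLineClosed A)
    (hAB : A ⊆ B) (hA' : A.Nonempty) (hcard : B.ncard = 3 * A.ncard) :
    ∃ C D : Set V, IsLineClosed C ∧ IsLineClosed D ∧ C.ncard = A.ncard ∧ D.ncard = A.ncard ∧
      Disjoint C D ∧ B \ A = C ∪ D ∧ ∀ p ∈ C, ∀ q ∈ D, -p - q ∈ A := by
  obtain ⟨a, ha⟩ := hA'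
  obtain ⟨x, hxB, hxA⟩ : (B \ A).Nonempty := by
    refine nonempty_of_ncard_ne_zero ?_
    rw [ncard_sdiff hAB, hcard]
    have := (ncard_pos (toFinite A)).2 ⟨a, ha⟩
    omega
  obtain ⟨d, rfl⟩ : ∃ d, x = a + d := ⟨x - a, (add_sub_cancel a x).symm⟩
  have hjoin : join A d = B := eq_of_subset_of_ncard_le (hB.join_subset hAB ha hxB)
    (by rw [hcard, hA.ncard_join ha hxA])
  refine ⟨(1 : ZMod 3) • d +ᵥ A, (2 : ZMod 3) • d +ᵥ A, hA.vadd _, hA.vadd _,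
    ncard_vadd_set _ _, ncard_vadd_set _ _, hA.pairwise_disjoint_vadd ha hxA (by decide),
    hjoin ▸ hA.join_sdiff_eq ha hxA, fun p hp q hq => ?_⟩
  have h := hA.neg_sub_mem_vadd hp hq
  rwa [show -((1 : ZMod 3) • d) - (2 : ZMod 3) • d = 0 by
    linear_combination (norm := module) -ZModModule.char_nsmul_eq_zero 3 d, zero_vadd] at h

end Flat

section Lines

variable {n : ℕ} {L B C D R S F : Set (Fin n → ZMod 3)} {X Q : Fin n → ZMod 3}

theorem IsLine.ncard_eq_three (hL : IsLine L) : L.ncard = 3 := by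
  obtain ⟨p, v, hv, rfl⟩ := hL
  have hrange : {x | ∃ t : ZMod 3, x = p + t • v} = range fun t : ZMod 3 => p + t • v := by
    ext; simp [eq_comm]
  rw [hrange, ncard_range_of_injective
    (fun s t h => smul_left_injective _ hv (add_left_cancel h)), Nat.card_zmod]

theorem IsLine.isLineClosed (hL : IsLine L) : IsLineClosed L := by
  obtain ⟨p, v, -, rfl⟩ := hL
  rintro _ ⟨s, rfl⟩ _ ⟨t, rfl⟩
  exact ⟨-s - t, by linear_combination (norm := module) -ZModModule.char_nsmul_eq_zero 3 p⟩

theorem isLine_triple (h : Q ≠ X) : IsLine {X, Q, -X - Q} :=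
  ⟨X, Q - X, sub_ne_zero.2 h, (setOf_add_smul_sub X Q).symm⟩

theorem IsLine.eq_triple (hL : IsLine L) (hX : X ∈ L) (hQ : Q ∈ L) (hQX : Q ≠ X) :
    L = {X, Q, -X - Q} :=
  (eq_of_subset_of_ncard_le
    (insert_subset hX (insert_subset hQ (singleton_subset_iff.2 (hL.isLineClosed X hX Q hQ))))
    (by rw [hL.ncard_eq_three, (isLine_triple hQX).ncard_eq_three])).symm

theorem three_le_ncard_of_lineDeg_pos (h : 0 < lineDeg S X) : 3 ≤ S.ncard := by
  obtain ⟨L, hL, -, hLS⟩ := nonempty_of_ncard_ne_zero h.ne'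
  exact hL.ncard_eq_three.ge.trans (ncard_le_ncard hLS)

theorem two_mul_lineDeg (hX : X ∈ S) :
    2 * lineDeg S X = {Q ∈ S | Q ≠ X ∧ -X - Q ∈ S}.ncard := by
  set lines := {L | IsLine L ∧ X ∈ L ∧ L ⊆ S}
  have hunion : {Q ∈ S | Q ≠ X ∧ -X - Q ∈ S} = ⋃ L ∈ lines, L \ {X} := by
    ext Q
    simp only [mem_ofPred_eq, mem_iUnion, mem_sdiff, mem_singleton_iff, exists_prop, lines]
    constructor
    · rintro ⟨hQ, hQX, hQ'⟩
      exact ⟨_, ⟨isLine_triple hQX, by simp, insert_subset hX (insert_subset hQ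
        (singleton_subset_iff.2 hQ'))⟩, by simp, hQX⟩
    · rintro ⟨L, ⟨hL, hXL, hLS⟩, hQL, hQX⟩
      rw [hL.eq_triple hXL hQL hQX] at hLS
      exact ⟨hLS (by simp), hQX, hLS (by simp)⟩
  have hdisj : lines.PairwiseDisjoint (· \ {X}) := by
    rintro L ⟨hL, hXL, -⟩ L' ⟨hL', hXL', -⟩ hne
    refine disjoint_left.2 fun Q hQ hQ' => hne ?_
    rw [hL.eq_triple hXL hQ.1 hQ.2, hL'.eq_triple hXL' hQ'.1 hQ'.2]
  have htwo : ∀ L ∈ lines, (L \ {X}).ncard = 2 := by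
    rintro L ⟨hL, hXL, -⟩
    rw [ncard_sdiff_singleton_of_mem hXL, hL.ncard_eq_three]
  rw [hunion, (toFinite lines).ncard_biUnion (fun _ _ => toFinite _) hdisj,
    finsum_mem_congr rfl htwo, lineDeg, ← finsum_one, mul_finsum_mem, mul_one]

noncomputable def pairDeg (R : Set (Fin n → ZMod 3)) (X : Fin n → ZMod 3) : ℕ :=
  {q ∈ R | -X - q ∈ R}.ncard

theorem two_mul_lineDeg_sdiff (hB : IsLineClosed B) (hRB : R ⊆ B) (hX : X ∈ B \ R) :
    2 * lineDeg (B \ R) X + 2 * R.ncard + 1 = B.ncard + pairDeg R X := by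
  set σ : (Fin n → ZMod 3) → (Fin n → ZMod 3) := fun q => -X - q
  have hσ : Involutive σ := fun q => sub_sub_cancel (-X) q
  have hpartners : {Q ∈ B \ R | Q ≠ X ∧ -X - Q ∈ B \ R} = (B \ {X}) \ (R ∪ σ ⁻¹' R) := by
    ext Q
    simp only [mem_ofPred_eq, mem_sdiff, mem_singleton_iff, mem_union, mem_preimage, σ]
    constructor
    · rintro ⟨⟨hQB, hQR⟩, hQX, -, hQ'R⟩
      exact ⟨⟨hQB, hQX⟩, by tauto⟩
    · rintro ⟨⟨hQB, hQX⟩, h⟩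
      simp only [not_or] at h
      exact ⟨⟨hQB, h.1⟩, hQX, hB X hX.1 Q hQB, h.2⟩
  have hsub : R ∪ σ ⁻¹' R ⊆ B \ {X} := by
    rintro q (hq | hq)
    · exact ⟨hRB hq, by rintro rfl; exact hX.2 hq⟩
    · refine ⟨hσ q ▸ hB X hX.1 _ (hRB hq), ?_⟩
      rintro rfl
      exact hX.2 (neg_sub_self_eq_self q ▸ hq)
  have hσR : (σ ⁻¹' R).ncard = R.ncard :=
    ncard_preimage_of_injective_subset_range hσ.injective (by simp [hσ.surjective.range_eq])
  have hunion := ncard_union_add_ncard_inter R (σ ⁻¹' R)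
  have hdiff := ncard_sdiff_add_ncard_of_subset hsub
  have hX1 := ncard_sdiff_singleton_add_one hX.1
  rw [two_mul_lineDeg hX, hpartners]
  unfold pairDeg
  change _ = _ + (R ∩ σ ⁻¹' R).ncard
  omega

theorem exists_neg_sub_mem_of_lineDeg_max (hB : IsLineClosed B) (hRB : R ⊆ B)
    (hR : ¬ IsLineClosed R) (hX : X ∈ B \ R)
    (hmax : ∀ Q ∈ B \ R, lineDeg (B \ R) Q ≤ lineDeg (B \ R) X) : ∃ q ∈ R, -X - q ∈ R := by
  simp only [IsLineClosed, not_forall, exists_prop] at hR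
  obtain ⟨q, hq, q', hq', hqq'⟩ := hR
  have hY : -q - q' ∈ B \ R := ⟨hB q (hRB hq) q' (hRB hq'), hqq'⟩
  have hY_pos : 0 < pairDeg R (-q - q') :=
    (ncard_pos (toFinite _)).2 ⟨q, hq, by convert hq' using 1; abel⟩
  have := two_mul_lineDeg_sdiff hB hRB hX
  have := two_mul_lineDeg_sdiff hB hRB hY
  have := hmax _ hY
  exact nonempty_of_ncard_ne_zero (show pairDeg R X ≠ 0 by omega)

theorem lineDeg_inter_eq (hsep : ∀ p ∈ C, ∀ q ∈ D, -p - q ∉ C ∪ D) (hS : S ⊆ C ∪ D)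
    (hX : X ∈ C) : lineDeg (S ∩ C) X = lineDeg S X := by
  unfold lineDeg
  congr 1
  ext L
  simp only [mem_ofPred_eq, subset_inter_iff]
  refine ⟨fun ⟨hL, hXL, hLS, _⟩ => ⟨hL, hXL, hLS⟩, fun ⟨hL, hXL, hLS⟩ => ⟨hL, hXL, hLS, ?_⟩⟩
  intro Q hQL
  by_contra hQC
  have hQD : Q ∈ D := (hS (hLS hQL)).resolve_left hQC
  exact hsep X hX Q hQD (hS (hLS (hL.isLineClosed X hXL Q hQL)))

theorem ncard_le_three_mul_ncard_sdiff (hB : IsLineClosed B) (hB1 : 1 < B.ncard)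
    (hF : IsCapset F) : B.ncard ≤ 3 * (B \ F).ncard := by
  obtain ⟨a, ha, b, hb, hab⟩ := (one_lt_ncard (toFinite B)).1 hB1
  refine (ncard_le_ncard (fun y hy => ?_)).trans (ncard_join_le (d := a - b))
  -- the line through `y` in direction `b - a` lies in `B`, so it meets `B \ F`
  obtain ⟨_, ⟨t, rfl⟩, hyF⟩ := not_subset.1 (hF _ ⟨y, b - a, sub_ne_zero.2 hab.symm, rfl⟩)
  exact mem_iUnion.2 ⟨t, _, ⟨hB.add_smul_sub_mem ha hb hy t, hyF⟩,
    by simp only [vadd_eq_add]; module⟩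

end Lines

section Greedy

variable {n : ℕ} {B C D S S' F G : Set (Fin n → ZMod 3)}

theorem IsCapset.subset (hF : IsCapset F) (hGF : G ⊆ F) : IsCapset G :=
  fun L hL hLG => hF L hL (hLG.trans hGF)

def GreedyStep (S S' : Set (Fin n → ZMod 3)) : Prop :=
  ∃ X ∈ S, 0 < lineDeg S X ∧ (∀ Q ∈ S, lineDeg S Q ≤ lineDeg S X) ∧ S' = S \ {X}

theorem IsGreedyCapset.reflTransGen (hC : IsGreedyCapset C) : ReflTransGen GreedyStep univ C := by
  obtain ⟨k, P, hP, rfl, -⟩ := hC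
  induction k with
  | zero => exact .refl
  | succ k ih =>
    obtain ⟨hmem, hpos, hmax⟩ := hP k (lt_add_one k)
    exact (ih fun i hi => hP i (hi.trans (lt_add_one k))).tail ⟨P k, hmem, hpos, hmax, rfl⟩

theorem GreedyStep.ncard_eq (h : GreedyStep S S') : S.ncard = S'.ncard + 1 := by
  obtain ⟨X, hX, -, -, rfl⟩ := h
  exact (ncard_sdiff_singleton_add_one hX).symm

theorem subset_of_reflTransGen_greedyStep (h : ReflTransGen GreedyStep S F) : F ⊆ S := by
  induction h with
  | refl => exact subset_rfl
  | tail _ hstep ih =>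
    obtain ⟨X, -, -, -, rfl⟩ := hstep
    exact sdiff_subset.trans ih

theorem isFlatStage_sdiff_of_reflTransGen (hB : IsLineClosed B)
    (h : ReflTransGen GreedyStep B S) : IsFlatStage (B \ S) := by
  induction h with
  | refl => exact Or.inl Set.sdiff_self
  | @tail S _ hBS hstep ih =>
    obtain ⟨X, hXS, -, hmax, rfl⟩ := hstep
    have hSB := subset_of_reflTransGen_greedyStep hBS
    have hS : B \ (B \ S) = S := sdiff_sdiff_cancel_left hSB
    have hremoved : B \ (S \ {X}) = insert X (B \ S) := by
      ext y
      by_cases hy : y = X <;> simp [hy, hSB hXS]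
    rw [hremoved]
    refine ih.insert (fun h => h.2 hXS) ?_
    by_cases hc : IsLineClosed (B \ S)
    · exact Or.inl hc
    · exact Or.inr (exists_neg_sub_mem_of_lineDeg_max hB sdiff_subset hc (by rwa [hS])
      (by rwa [hS]))

theorem reflTransGen_inter_of_sep (hsep : ∀ p ∈ C, ∀ q ∈ D, -p - q ∉ C ∪ D)
    (h : ReflTransGen GreedyStep (C ∪ D) F) : ReflTransGen GreedyStep C (F ∩ C) := by
  induction h with
  | refl => rw [union_inter_cancel_left]
  | @tail S _ hS hstep ih =>
    obtain ⟨X, hXS, hpos, hmax, rfl⟩ := hstep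
    have hSCD := subset_of_reflTransGen_greedyStep hS
    rw [← inter_sdiff_right_comm]
    by_cases hXC : X ∈ C
    · refine ih.tail ⟨X, ⟨hXS, hXC⟩, ?_, fun Q hQ => ?_, rfl⟩
      · rwa [lineDeg_inter_eq hsep hSCD hXC]
      · rw [lineDeg_inter_eq hsep hSCD hQ.2, lineDeg_inter_eq hsep hSCD hXC]
        exact hmax Q hQ.1
    · rwa [sdiff_singleton_eq_self fun h => hXC h.2]

theorem exists_reflTransGen_ncard_sdiff_eq {m : ℕ} (hB : IsLineClosed B)
    (hBm : B.ncard = 3 ^ (m + 1)) (h : ReflTransGen GreedyStep B F) (hF : IsCapset F) :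
    ∃ S, ReflTransGen GreedyStep S F ∧ S ⊆ B ∧ IsLineClosed (B \ S) ∧
      (B \ S).ncard = 3 ^ m := by
  have h3m : 0 < 3 ^ m := by positivity
  have hle := ncard_le_three_mul_ncard_sdiff hB (by rw [hBm, pow_succ]; omega) hF
  have hFB := ncard_sdiff_add_ncard_of_subset (subset_of_reflTransGen_greedyStep h)
  rw [hBm, pow_succ] at hle hFB
  obtain ⟨S, hBS, hSF, hS⟩ := h.exists_between ncard (fun _ _ h => h.ncard_eq)
    (k := 2 * 3 ^ m) (by omega) (by omega)
  have hSB := subset_of_reflTransGen_greedyStep hBS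
  have hA : (B \ S).ncard = 3 ^ m := by
    have := ncard_sdiff_add_ncard_of_subset hSB
    omega
  exact ⟨S, hSF, hSB, (isFlatStage_sdiff_of_reflTransGen hB hBS).isLineClosed hA, hA⟩

theorem ncard_eq_two_pow_of_reflTransGen (m : ℕ) (hB : IsLineClosed B) (hBm : B.ncard = 3 ^ m)
    (h : ReflTransGen GreedyStep B F) (hF : IsCapset F) : F.ncard = 2 ^ m := by
  induction m generalizing B F with
  | zero =>
    rcases h.cases_head with rfl | ⟨S, ⟨X, -, hpos, -⟩, -⟩
    · exact hBm
    · have := three_le_ncard_of_lineDeg_pos hpos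
      omega
  | succ m ih =>
    obtain ⟨S, hSF, hSB, hA, hAm⟩ := exists_reflTransGen_ncard_sdiff_eq hB hBm h hF
    obtain ⟨C, D, hC, hD, hCm, hDm, hCD, hS, hsep⟩ := hB.exists_sdiff_eq_union hA sdiff_subset
      (nonempty_of_ncard_ne_zero (by rw [hAm]; positivity)) (by rw [hBm, hAm, pow_succ, mul_comm])
    rw [sdiff_sdiff_cancel_left hSB] at hS
    subst hS
    have hsepCD : ∀ p ∈ C, ∀ q ∈ D, -p - q ∉ C ∪ D := fun p hp q hq => (hsep p hp q hq).2
    have hsepDC : ∀ q ∈ D, ∀ p ∈ C, -q - p ∉ D ∪ C := by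
      intro q hq p hp
      rw [neg_sub_comm, union_comm]
      exact hsepCD p hp q hq
    have hFC := ih hC (hCm.trans hAm) (reflTransGen_inter_of_sep hsepCD hSF)
      (hF.subset inter_subset_left)
    have hFD := ih hD (hDm.trans hAm) (reflTransGen_inter_of_sep hsepDC (union_comm C D ▸ hSF))
      (hF.subset inter_subset_left)
    have hFCD : F = F ∩ C ∪ F ∩ D := by
      rw [← inter_union_distrib_left, inter_eq_left.2 (subset_of_reflTransGen_greedyStep hSF)]
    rw [hFCD, ncard_union_eq (hCD.mono inter_subset_right inter_subset_right), hFC, hFD, pow_succ]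
    ring

end Greedy

theorem greedy_capsets_stmt5_general {n : ℕ} (C : Set (Fin n → ZMod 3))
    (hC : IsGreedyCapset C) : C.ncard = 2 ^ n := by
  obtain ⟨-, -, -, -, hcap⟩ := id hC
  exact ncard_eq_two_pow_of_reflTransGen n isLineClosed_univ (by simp [ncard_univ])
    hC.reflTransGen hcap

/-- Every greedy capset in `𝔽₃ⁿ` (`n ≥ 1`) has cardinality `2ⁿ`. -/
theorem greedy_capsets_stmt5 {n : ℕ} (hn : 1 ≤ n) (C : Set (Fin n → ZMod 3))
    (hC : IsGreedyCapset C) : C.ncard = 2 ^ n :=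
  greedy_capsets_stmt5_general C hC
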